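/- Let α ∈ (0,1], let D_α^U be as in Theorem 1, and set D̃ = max(D_α^U, 1). Then Var(D̃) = -e^{4α}/16 + (4/9)e^{3α} + (α/4 - 5/8)e^{2α} - α²/4 - α/12 + 35/144. Moreover Var(D̃) = Var(D_α^U) - 2(1-α)E[D_α^U] + α - α². -/

import Mathlib

/-!
Write `p k = P(D = k)` and `x t = 1 - e^{-t}`, so that `p (k + 1) = ∫₀^α (1 - α + t) x(t)^k dt`.
All terms are nonnegative, so moment series may be summed under the integral, and
`∑ (k+1) x^k = (1 - x)⁻² = e^{2t}`, `∑ (k+1)² x^k = 2(1 - x)⁻³ - (1 - x)⁻² = 2e^{3t} - e^{2t}`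
turn `E[D]` and `E[D²]` into integrals of `(b + t) e^{ct}`. Since `D̃ = D + 1_{D = 0}` and
`D̃² = D² + 1_{D = 0}`, both moments of `D̃` exceed those of `D` by `P(D = 0) = 1 - α`.
-/

open Real MeasureTheory ProbabilityTheory
open scoped Interval

section Series

variable {𝕜 : Type*} [NormedField 𝕜] {r : 𝕜}

theorem hasSum_succ_mul_geometric_of_norm_lt_one (hr : ‖r‖ < 1) :
    HasSum (fun n : ℕ => ((n : 𝕜) + 1) * r ^ n) (1 / (1 - r) ^ 2) := by
  simpa using hasSum_choose_mul_geometric_of_norm_lt_one 1 hr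

theorem hasSum_succ_sq_mul_geometric_of_norm_lt_one (hr : ‖r‖ < 1) :
    HasSum (fun n : ℕ => ((n : 𝕜) + 1) ^ 2 * r ^ n) (2 / (1 - r) ^ 3 - 1 / (1 - r) ^ 2) := by
  have h := ((hasSum_choose_mul_geometric_of_norm_lt_one 2 hr).mul_left 2).sub
    (hasSum_succ_mul_geometric_of_norm_lt_one hr)
  rw [show (2 : 𝕜) * (1 / (1 - r) ^ (2 + 1)) = 2 / (1 - r) ^ 3 by ring] at h
  refine h.congr_fun fun n => ?_
  have hchoose : (n + 2).choose 2 * 2 = (n + 2) * (n + 1) := by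
    have := Nat.add_one_mul_choose_eq (n + 1) 1
    simp only [Nat.choose_one_right] at this
    rw [this]
  have hchoose' : (((n + 2).choose 2 : ℕ) : 𝕜) * 2 = (n + 2) * (n + 1) := by
    exact_mod_cast congrArg (Nat.cast : ℕ → 𝕜) hchoose
  linear_combination -r ^ n * hchoose'

end Series

theorem norm_one_sub_exp_neg_lt_one {t : ℝ} (ht : 0 ≤ t) : ‖1 - exp (-t)‖ < 1 := by
  have : exp (-t) ≤ 1 := exp_le_one_iff.2 (by linarith)
  rw [Real.norm_of_nonneg (by linarith)]
  linarith [exp_pos (-t)]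

theorem hasSum_succ_mul_one_sub_exp_neg_pow {t : ℝ} (ht : 0 ≤ t) :
    HasSum (fun n : ℕ => ((n : ℝ) + 1) * (1 - exp (-t)) ^ n) (exp (2 * t)) := by
  have h := hasSum_succ_mul_geometric_of_norm_lt_one (norm_one_sub_exp_neg_lt_one ht)
  rwa [sub_sub_cancel, ← exp_nat_mul, one_div, ← exp_neg, show -((2 : ℕ) * -t) = 2 * t by
    push_cast; ring] at h

theorem hasSum_succ_sq_mul_one_sub_exp_neg_pow {t : ℝ} (ht : 0 ≤ t) :
    HasSum (fun n : ℕ => ((n : ℝ) + 1) ^ 2 * (1 - exp (-t)) ^ n)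
      (2 * exp (3 * t) - exp (2 * t)) := by
  have h := hasSum_succ_sq_mul_geometric_of_norm_lt_one (norm_one_sub_exp_neg_lt_one ht)
  rwa [sub_sub_cancel, ← exp_nat_mul, ← exp_nat_mul, div_eq_mul_inv, one_div, ← exp_neg,
    ← exp_neg, show -((3 : ℕ) * -t) = 3 * t by push_cast; ring,
    show -((2 : ℕ) * -t) = 2 * t by push_cast; ring] at h

theorem integral_add_mul_exp (b c x : ℝ) (hc : c ≠ 0) :
    ∫ t in (0:ℝ)..x, (b + t) * exp (c * t) =
      ((b + x - 1 / c) * exp (c * x) - (b - 1 / c)) / c := by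
  have hderiv : ∀ t, HasDerivAt (fun t => (b + t - 1 / c) * exp (c * t) / c)
      ((b + t) * exp (c * t)) t := by
    intro t
    have hexp : HasDerivAt (fun t => exp (c * t)) (exp (c * t) * c) t := by
      simpa using ((hasDerivAt_id t).const_mul c).exp
    have h := ((((hasDerivAt_id t).const_add b).sub_const (1 / c)).mul hexp).div_const c
    refine h.congr_deriv ?_
    simp only [id]
    field_simp
    ring
  rw [intervalIntegral.integral_eq_sub_of_hasDerivAt (fun t _ => hderiv t)
    (by apply Continuous.intervalIntegrable; fun_prop)]
  simp
  ring

theorem integral_add_mul_two_exp_three_sub_exp_two (b x : ℝ) :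
    ∫ t in (0:ℝ)..x, (b + t) * (2 * exp (3 * t) - exp (2 * t)) =
      2 * (((b + x - 1 / 3) * exp (3 * x) - (b - 1 / 3)) / 3)
        - ((b + x - 1 / 2) * exp (2 * x) - (b - 1 / 2)) / 2 := by
  rw [← integral_add_mul_exp _ _ _ three_ne_zero, ← integral_add_mul_exp _ _ _ two_ne_zero,
    ← intervalIntegral.integral_const_mul, ← intervalIntegral.integral_sub
      (Continuous.intervalIntegrable (by fun_prop) _ _)
      (Continuous.intervalIntegrable (by fun_prop) _ _)]
  congr 1 with t
  ring

theorem intervalIntegral.hasSum_integral_of_nonneg {ι : Type*} [Countable ι] {a b : ℝ}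
    {F : ι → ℝ → ℝ} {f : ℝ → ℝ} (hF : ∀ n, IntervalIntegrable (F n) volume a b)
    (hf : IntervalIntegrable f volume a b) (hF0 : ∀ n, ∀ t ∈ Ι a b, 0 ≤ F n t)
    (hFf : ∀ t ∈ Ι a b, HasSum (fun n => F n t) (f t)) :
    HasSum (fun n => ∫ t in a..b, F n t) (∫ t in a..b, f t) := by
  refine intervalIntegral.hasSum_integral_of_dominated_convergence F
    (fun n => (hF n).def'.aestronglyMeasurable)
    (fun n => ae_of_all _ fun t ht => (Real.norm_of_nonneg (hF0 n t ht)).le)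
    (ae_of_all _ fun t ht => (hFf t ht).summable) ?_ (ae_of_all _ hFf)
  exact hf.congr_ae <| (ae_restrict_mem measurableSet_uIoc).mono fun t ht =>
    (hFf t ht).tsum_eq.symm

theorem integrable_and_hasSum_integral_of_summable {X E : Type*} [MeasurableSpace X]
    [MeasurableSingletonClass X] [Countable X] {μ : Measure X} [IsFiniteMeasure μ]
    [NormedAddCommGroup E] [NormedSpace ℝ E] [CompleteSpace E] {f : X → E}
    (hf : Summable fun x => μ.real {x} * ‖f x‖) :
    Integrable f μ ∧ HasSum (fun x => μ.real {x} • f x) (∫ x, f x ∂μ) := by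
  have hμ := Measure.sum_smul_dirac μ
  have hc : ∀ x, μ {x} ≠ ⊤ := fun x => measure_ne_top μ {x}
  refine ⟨hμ ▸ integrable_sum_dirac hc hf, ?_⟩
  have := hasSum_integral_sum_dirac hc hf
  rwa [hμ] at this

theorem integrable_and_integral_eq_of_hasSum_succ {μ : Measure ℕ} [IsFiniteMeasure μ]
    {f : ℕ → ℝ} (hf0 : f 0 = 0) (hf : ∀ k, 0 ≤ f k) {s : ℝ}
    (h : HasSum (fun k => μ.real {k + 1} * f (k + 1)) s) :
    Integrable f μ ∧ ∫ k, f k ∂μ = s := by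
  have h' : HasSum (fun k => μ.real {k} * f k) s :=
    (hasSum_nat_add_iff' 1).1 (by simpa [hf0] using h)
  obtain ⟨hint, hsum⟩ := integrable_and_hasSum_integral_of_summable (μ := μ) (f := f)
    (h'.summable.congr fun k => by rw [Real.norm_of_nonneg (hf k)])
  exact ⟨hint, hsum.unique h'⟩

theorem max_natCast_one_pow {m : ℕ} (hm : m ≠ 0) (k : ℕ) :
    max (k : ℝ) 1 ^ m = (k : ℝ) ^ m + ({0} : Set ℕ).indicator 1 k := by
  rcases k with _ | k
  · simp [hm]
  · simp

section Variance

variable {μ : Measure ℕ} [IsProbabilityMeasure μ]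

theorem integral_max_natCast_one_pow {m : ℕ} (hm : m ≠ 0)
    (h : Integrable (fun k : ℕ => (k : ℝ) ^ m) μ) :
    ∫ k, max (k : ℝ) 1 ^ m ∂μ = ∫ k, (k : ℝ) ^ m ∂μ + μ.real {0} := by
  simp_rw [max_natCast_one_pow hm]
  rw [integral_add (g := ({0} : Set ℕ).indicator 1) h
      ((integrable_const 1).indicator (measurableSet_singleton 0)),
    integral_indicator_one (measurableSet_singleton 0)]

theorem variance_natCast (h : Integrable (fun k : ℕ => (k : ℝ) ^ 2) μ) :
    variance (fun k : ℕ => (k : ℝ)) μ = ∫ k, (k : ℝ) ^ 2 ∂μ - (∫ k, (k : ℝ) ∂μ) ^ 2 :=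
  variance_eq_sub <| (memLp_two_iff_integrable_sq measurable_from_top.aestronglyMeasurable).2 h

theorem variance_max_natCast_one (h : Integrable (fun k : ℕ => (k : ℝ) ^ 2) μ) :
    variance (fun k : ℕ => max (k : ℝ) 1) μ =
      variance (fun k : ℕ => (k : ℝ)) μ - 2 * μ.real {0} * ∫ k, (k : ℝ) ∂μ
        + μ.real {0} - μ.real {0} ^ 2 := by
  have hmem : MemLp (fun k : ℕ => (k : ℝ)) 2 μ :=
    (memLp_two_iff_integrable_sq measurable_from_top.aestronglyMeasurable).2 h
  have hmax_sq : Integrable (fun k : ℕ => max (k : ℝ) 1 ^ 2) μ := by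
    simp_rw [max_natCast_one_pow two_ne_zero]
    exact h.add ((integrable_const 1).indicator (measurableSet_singleton 0))
  rw [variance_eq_sub ((memLp_two_iff_integrable_sq
      measurable_from_top.aestronglyMeasurable).2 hmax_sq), variance_natCast h]
  simp only [Pi.pow_apply]
  have hmean := integral_max_natCast_one_pow one_ne_zero (μ := μ)
    (by simpa using hmem.integrable one_le_two)
  simp only [pow_one] at hmean
  rw [integral_max_natCast_one_pow two_ne_zero h, hmean]
  ring

end Variance

theorem hasSum_mul_measureReal_succ {α : ℝ} (hα0 : 0 ≤ α) (hα1 : α ≤ 1) {μ : Measure ℕ}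
    (hk : ∀ k : ℕ, 1 ≤ k →
      (μ {k}).toReal = ∫ t in (0:ℝ)..α, (1 - α + t) * (1 - exp (-t)) ^ (k - 1))
    {c : ℕ → ℝ} (hc : ∀ k, 0 ≤ c k) {G : ℝ → ℝ} (hG : Continuous G)
    (hcG : ∀ t, 0 ≤ t → HasSum (fun k => c k * (1 - exp (-t)) ^ k) (G t)) :
    HasSum (fun k => μ.real {k + 1} * c k) (∫ t in (0:ℝ)..α, (1 - α + t) * G t) := by
  have hterm : ∀ k, μ.real {k + 1} * c k =
      ∫ t in (0:ℝ)..α, c k * ((1 - α + t) * (1 - exp (-t)) ^ k) := fun k => by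
    rw [measureReal_def, hk (k + 1) le_add_self, Nat.add_sub_cancel,
      intervalIntegral.integral_const_mul, mul_comm]
  refine (intervalIntegral.hasSum_integral_of_nonneg (fun k => ?_) ?_ (fun k t ht => ?_)
    (fun t ht => ?_)).congr_fun hterm
  · exact Continuous.intervalIntegrable (by fun_prop) _ _
  · exact Continuous.intervalIntegrable (by fun_prop) _ _
  · rw [Set.uIoc_of_le hα0] at ht
    have : exp (-t) ≤ 1 := exp_le_one_iff.2 (by linarith [ht.1])
    exact mul_nonneg (hc k) (mul_nonneg (by linarith [ht.1]) (pow_nonneg (by linarith) k))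
  · rw [Set.uIoc_of_le hα0] at ht
    exact ((hcG t ht.1.le).mul_left (1 - α + t)).congr_fun fun k => by ring

/-- Variance of the limiting number of probes `D̃ = max(D_α^U, 1)` in an unsuccessful
search, and its relation to the variance and mean of `D_α^U`. -/
theorem stmt_19 (α : ℝ) (hα : α ∈ Set.Ioc (0:ℝ) 1)
    (μ : Measure ℕ) [IsProbabilityMeasure μ]
    (h0 : (μ {0}).toReal = 1 - α)
    (hk : ∀ k : ℕ, 1 ≤ k →
      (μ {k}).toReal = ∫ t in (0:ℝ)..α, (1 - α + t) * (1 - Real.exp (-t)) ^ (k - 1)) :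
    variance (fun k : ℕ => max (k : ℝ) 1) μ =
      -Real.exp (4 * α) / 16 + (4 / 9) * Real.exp (3 * α)
        + (α / 4 - 5 / 8) * Real.exp (2 * α) - α ^ 2 / 4 - α / 12 + 35 / 144 ∧
    variance (fun k : ℕ => max (k : ℝ) 1) μ =
      variance (fun k : ℕ => (k : ℝ)) μ
        - 2 * (1 - α) * (∫ k, (k : ℝ) ∂μ) + α - α ^ 2 := by
  obtain ⟨hα0, hα1⟩ := hα
  obtain ⟨-, hmean⟩ := integrable_and_integral_eq_of_hasSum_succ (μ := μ)
    (f := fun k => (k : ℝ)) Nat.cast_zero (fun k => k.cast_nonneg) (by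
      simpa using hasSum_mul_measureReal_succ hα0.le hα1 hk (fun k => by positivity)
        (by fun_prop) fun t => hasSum_succ_mul_one_sub_exp_neg_pow)
  obtain ⟨hint_sq, hmean_sq⟩ := integrable_and_integral_eq_of_hasSum_succ (μ := μ)
    (f := fun k => (k : ℝ) ^ 2) (by simp) (fun k => by positivity) (by
      simpa using hasSum_mul_measureReal_succ hα0.le hα1 hk (fun k => by positivity)
        (by fun_prop) fun t => hasSum_succ_sq_mul_one_sub_exp_neg_pow)
  have hvar := variance_max_natCast_one hint_sq
  rw [measureReal_def, h0] at hvar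
  refine ⟨?_, by rw [hvar]; ring⟩
  rw [hvar, variance_natCast hint_sq, hmean, hmean_sq]
  have hexp4 : exp (4 * α) = exp (2 * α) ^ 2 := by rw [← exp_nat_mul]; ring_nf
  rw [integral_add_mul_two_exp_three_sub_exp_two, integral_add_mul_exp _ _ _ two_ne_zero, hexp4]
  ring
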